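/- In the construction of A, for any two configurations α₁, α₂ : ℤ → Q̃ with F̃(α₁) = F̃(α₂), for all x ∈ ℤ: (α₁(x),α₁(x+1)) ∈ B_C ↔ (α₂(x),α₂(x+1)) ∈ B_C, and (α₁(x),α₁(x+1)) ∈ B_R ↔ (α₂(x),α₂(x+1)) ∈ B_R. -/

import Mathlib

open scoped Classical

noncomputable section

/-- Heavy-particle part of a state: `p_C(q) = 2·sR·(q / (2·sR))`. -/
def pC (sR q : ℕ) : ℕ := 2 * sR * (q / (2 * sR))

/-- Light-particle part of a state: `p_R(q) = q mod (2·sR)`. -/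
def pR (sR q : ℕ) : ℕ := q % (2 * sR)

/-- All heavy particles `C̃ = {2k·sR : 0 ≤ k ≤ 2sC−1}`. -/
def Ctil (sC sR : ℕ) : Set ℕ := {c | ∃ k < 2 * sC, c = 2 * k * sR}

/-- All light particles `R̃ = {0,…,2sR−1}`. -/
def Rtil (sR : ℕ) : Set ℕ := {r | r < 2 * sR}

/-- `Ĉ = {2k·sR : 0 ≤ k ≤ sC−1}`. -/
def Chat (sC sR : ℕ) : Set ℕ := {c | ∃ k < sC, c = 2 * k * sR}

/-- `Č = {2(k+sC)·sR : 0 ≤ k ≤ sC−1}`. -/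
def Ccheck (sC sR : ℕ) : Set ℕ := {c | ∃ k < sC, c = 2 * (k + sC) * sR}

/-- `R̂ = {0,…,sR−1}`. -/
def Rhat (sR : ℕ) : Set ℕ := {r | r < sR}

/-- `Ř = {sR,…,2sR−1}`. -/
def Rcheck (sR : ℕ) : Set ℕ := {r | sR ≤ r ∧ r < 2 * sR}

/-- Balanced pair of states w.r.t. heavy particles. -/
def BC (sC sR q1 q2 : ℕ) : Prop :=
  pC sR q1 ∈ Chat sC sR ∧ pC sR q2 ∈ Ccheck sC sR ∧
    pC sR q1 + pC sR q2 = 2 * (2 * sC - 1) * sR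

/-- Balanced pair of states w.r.t. light particles. -/
def BR (sR q1 q2 : ℕ) : Prop :=
  pR sR q1 ∈ Rhat sR ∧ pR sR q2 ∈ Rcheck sR ∧
    pR sR q1 + pR sR q2 = 2 * sR - 1

/-- `φ̂_C : C → Ĉ` built from an arbitrary bijection `φC` of `C = Fin sC`. -/
def phatC (sC sR : ℕ) (φC : Fin sC ≃ Fin sC) (c : Fin sC) : ℕ := 2 * (φC c : ℕ) * sR

/-- `φ̂_R : R → R̂` built from an arbitrary bijection `φR` of `R = Fin sR`. -/
def phatR (sR : ℕ) (φR : Fin sR ≃ Fin sR) (r : Fin sR) : ℕ := (φR r : ℕ)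

/-- `φ̌_C(c) = 2(2sC−1)sR − φ̂_C(c)`. -/
def pcheckC (sC sR : ℕ) (φC : Fin sC ≃ Fin sC) (c : Fin sC) : ℕ :=
  2 * (2 * sC - 1) * sR - phatC sC sR φC c

/-- `φ̌_R(r) = 2sR−1 − φ̂_R(r)`. -/
def pcheckR (sR : ℕ) (φR : Fin sR ≃ Fin sR) (r : Fin sR) : ℕ :=
  2 * sR - 1 - phatR sR φR r

/-- `φ̂(c,r) = φ̂_C(c) + φ̂_R(r)`. -/
def phat (sC sR : ℕ) (φC : Fin sC ≃ Fin sC) (φR : Fin sR ≃ Fin sR)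
    (q : Fin sC × Fin sR) : ℕ := phatC sC sR φC q.1 + phatR sR φR q.2

/-- `φ̌(c,r) = φ̌_C(c) + φ̌_R(r)`. -/
def pcheck (sC sR : ℕ) (φC : Fin sC ≃ Fin sC) (φR : Fin sR ≃ Fin sR)
    (q : Fin sC × Fin sR) : ℕ := pcheckC sC sR φC q.1 + pcheckR sR φR q.2

/-- `Q̂ = {ĉ + r̂ : ĉ ∈ Ĉ, r̂ ∈ R̂}`. -/
def Qhat (sC sR : ℕ) : Set ℕ := {q | ∃ c ∈ Chat sC sR, ∃ r ∈ Rhat sR, q = c + r}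

/-- `Q̌ = {č + ř : č ∈ Č, ř ∈ Ř}`. -/
def Qcheck (sC sR : ℕ) : Set ℕ := {q | ∃ c ∈ Ccheck sC sR, ∃ r ∈ Rcheck sR, q = c + r}

/-- `φ̂_C⁻¹` applied to a heavy particle (given as a natural number). -/
def decC (sC sR : ℕ) [NeZero sC] (φC : Fin sC ≃ Fin sC) (c : ℕ) : Fin sC :=
  φC.symm ⟨(c / (2 * sR)) % sC, Nat.mod_lt _ (Nat.pos_of_ne_zero (NeZero.ne sC))⟩

/-- `φ̂_R⁻¹` applied to a light particle (given as a natural number). -/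
def decR (sR : ℕ) [NeZero sR] (φR : Fin sR ≃ Fin sR) (r : ℕ) : Fin sR :=
  φR.symm ⟨r % sR, Nat.mod_lt _ (Nat.pos_of_ne_zero (NeZero.ne sR))⟩

/-- The three-case local function `f̃` of the 4-neighbor RNCCA `A`. -/
def ftil (sC sR : ℕ) [NeZero sC] [NeZero sR] (φC : Fin sC ≃ Fin sC) (φR : Fin sR ≃ Fin sR)
    (f : Fin sC × Fin sR → Fin sC × Fin sR) (qm2 qm1 q0 q1 : ℕ) : ℕ :=
  if BR sR qm1 q0 ∧ BC sC sR q0 q1 then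
    phat sC sR φC φR (f (decC sC sR φC (pC sR q0), decR sR φR (pR sR qm1)))
  else if BR sR qm2 qm1 ∧ BC sC sR qm1 q0 then
    pcheck sC sR φC φR (f (decC sC sR φC (pC sR qm1), decR sR φR (pR sR qm2)))
  else pC sR q0 + pR sR qm1

/-- Global function `F̃` of `A` with neighborhood `(−2,−1,0,1)`. -/
def Ftil (sC sR : ℕ) [NeZero sC] [NeZero sR] (φC : Fin sC ≃ Fin sC) (φR : Fin sR ≃ Fin sR)
    (f : Fin sC × Fin sR → Fin sC × Fin sR) (α : ℤ → ℕ) (x : ℤ) : ℕ :=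
  ftil sC sR φC φR f (α (x - 2)) (α (x - 1)) (α x) (α (x + 1))

/-- The encoding `τ̃`: `τ̃(α)(2x) = φ̂(α(x))`, `τ̃(α)(2x+1) = φ̌(α(x))`. -/
def tenc (sC sR : ℕ) (φC : Fin sC ≃ Fin sC) (φR : Fin sR ≃ Fin sR)
    (α : ℤ → Fin sC × Fin sR) (y : ℤ) : ℕ :=
  if Even y then phat sC sR φC φR (α (y / 2)) else pcheck sC sR φC φR (α ((y - 1) / 2))

/-- Global function of the 2-neighbor PCA `P` with neighborhood `(0,−1)`. -/
def FP {C R : Type*} (f : C × R → C × R) (α : ℤ → C × R) (x : ℤ) : C × R :=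
  f ((α x).1, (α (x - 1)).2)

end

/-! The rule `f̃` writes `φ̂(u)` at the left cell and `φ̌(u)` at the right cell of a
balanced pair, and otherwise keeps the heavy particle of the cell and takes the light particle of
its left neighbour. Since `Ĉ ∩ Č = ∅` and `R̂ ∩ Ř = ∅`, a `B_C`-pair of `F̃(α)` lies exactly over a
`B_C`-pair of `α`, and a `B_R`-pair of `F̃(α)` lies one cell to the right of a `B_R`-pair of `α`.
Hence both relations on `α` can be read off `F̃(α)`. -/

section Equivariance

variable {sC sR : ℕ} (φC : Fin sC ≃ Fin sC) (φR : Fin sR ≃ Fin sR)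
  (f : Fin sC × Fin sR → Fin sC × Fin sR)

lemma pC_two_mul_mul_add {k r : ℕ} (hr : r < 2 * sR) : pC sR (2 * k * sR + r) = 2 * k * sR := by
  rw [pC, show 2 * k * sR = 2 * sR * k by ring, Nat.mul_add_div (by omega), Nat.div_eq_of_lt hr,
    add_zero]

lemma pR_two_mul_mul_add {k r : ℕ} (hr : r < 2 * sR) : pR sR (2 * k * sR + r) = r := by
  rw [pR, show 2 * k * sR = 2 * sR * k by ring, Nat.mul_add_mod, Nat.mod_eq_of_lt hr]

lemma pR_lt [NeZero sR] (q : ℕ) : pR sR q < 2 * sR :=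
  Nat.mod_lt _ (by have := NeZero.pos sR; omega)

lemma pC_eq_two_mul_mul (q : ℕ) : pC sR q = 2 * (q / (2 * sR)) * sR := by
  rw [pC]; ring

lemma pC_pC_add_pR [NeZero sR] (q q' : ℕ) : pC sR (pC sR q + pR sR q') = pC sR q := by
  rw [pC_eq_two_mul_mul q, pC_two_mul_mul_add (pR_lt q')]

lemma pR_pC_add_pR [NeZero sR] (q q' : ℕ) : pR sR (pC sR q + pR sR q') = pR sR q' := by
  rw [pC_eq_two_mul_mul q, pR_two_mul_mul_add (pR_lt q')]

lemma pcheckC_eq (c : Fin sC) :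
    pcheckC sC sR φC c = 2 * (2 * sC - 1 - φC c) * sR := by
  rw [pcheckC, phatC, ← Nat.sub_mul, ← Nat.mul_sub]

lemma pC_phat (u : Fin sC × Fin sR) :
    pC sR (phat sC sR φC φR u) = phatC sC sR φC u.1 :=
  pC_two_mul_mul_add (by have := (φR u.2).isLt; rw [phatR]; omega)

lemma pR_phat (u : Fin sC × Fin sR) :
    pR sR (phat sC sR φC φR u) = phatR sR φR u.2 :=
  pR_two_mul_mul_add (by have := (φR u.2).isLt; rw [phatR]; omega)

lemma pC_pcheck [NeZero sR] (u : Fin sC × Fin sR) :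
    pC sR (pcheck sC sR φC φR u) = pcheckC sC sR φC u.1 := by
  rw [pcheck, pcheckC_eq, pC_two_mul_mul_add (by have := NeZero.pos sR; rw [pcheckR]; omega)]

lemma pR_pcheck [NeZero sR] (u : Fin sC × Fin sR) :
    pR sR (pcheck sC sR φC φR u) = pcheckR sR φR u.2 := by
  rw [pcheck, pcheckC_eq, pR_two_mul_mul_add (by have := NeZero.pos sR; rw [pcheckR]; omega)]

lemma phatC_mem_Chat (c : Fin sC) : phatC sC sR φC c ∈ Chat sC sR :=
  ⟨φC c, (φC c).isLt, rfl⟩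

lemma phatR_mem_Rhat (r : Fin sR) : phatR sR φR r ∈ Rhat sR :=
  (φR r).isLt

lemma pcheckC_mem_Ccheck (c : Fin sC) : pcheckC sC sR φC c ∈ Ccheck sC sR := by
  have := (φC c).isLt
  exact ⟨sC - 1 - φC c, by omega, by rw [pcheckC_eq]; congr 2; omega⟩

lemma pcheckR_mem_Rcheck (r : Fin sR) : pcheckR sR φR r ∈ Rcheck sR := by
  have := (φR r).isLt
  simp only [pcheckR, phatR, Rcheck, Set.mem_ofPred_eq]
  omega

lemma Chat_disjoint_Ccheck [NeZero sR] : Disjoint (Chat sC sR) (Ccheck sC sR) := by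
  rw [Set.disjoint_left]
  rintro _ ⟨k, hk, rfl⟩ ⟨k', -, h⟩
  have := Nat.eq_of_mul_eq_mul_right (NeZero.pos sR) h
  omega

lemma Rhat_disjoint_Rcheck : Disjoint (Rhat sR) (Rcheck sR) := by
  rw [Set.disjoint_left]
  rintro r (hr : r < sR) ⟨hr', -⟩
  omega

lemma BC_congr {q₁ q₂ q₁' q₂' : ℕ} (h₁ : pC sR q₁ = pC sR q₁') (h₂ : pC sR q₂ = pC sR q₂') :
    BC sC sR q₁ q₂ ↔ BC sC sR q₁' q₂' := by
  rw [BC, BC, h₁, h₂]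

lemma BR_congr {q₁ q₂ q₁' q₂' : ℕ} (h₁ : pR sR q₁ = pR sR q₁') (h₂ : pR sR q₂ = pR sR q₂') :
    BR sR q₁ q₂ ↔ BR sR q₁' q₂' := by
  rw [BR, BR, h₁, h₂]

lemma BC_phat_pcheck [NeZero sR] (u : Fin sC × Fin sR) :
    BC sC sR (phat sC sR φC φR u) (pcheck sC sR φC φR u) := by
  refine ⟨?_, ?_, ?_⟩
  · rw [pC_phat]; exact phatC_mem_Chat φC u.1
  · rw [pC_pcheck]; exact pcheckC_mem_Ccheck φC u.1
  · have : phatC sC sR φC u.1 ≤ 2 * (2 * sC - 1) * sR := by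
      have := (φC u.1).isLt
      rw [phatC]; gcongr; omega
    rw [pC_phat, pC_pcheck, pcheckC, Nat.add_sub_cancel' this]

lemma BR_phat_pcheck [NeZero sR] (u : Fin sC × Fin sR) :
    BR sR (phat sC sR φC φR u) (pcheck sC sR φC φR u) := by
  refine ⟨?_, ?_, ?_⟩
  · rw [pR_phat]; exact phatR_mem_Rhat φR u.2
  · rw [pR_pcheck]; exact pcheckR_mem_Rcheck φR u.2
  · have := (φR u.2).isLt
    rw [pR_phat, pR_pcheck, pcheckR, phatR]
    omega

lemma BC_ftil_ftil_iff [NeZero sC] [NeZero sR] (a b c d e : ℕ) :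
    BC sC sR (ftil sC sR φC φR f a b c d) (ftil sC sR φC φR f b c d e) ↔ BC sC sR c d := by
  by_cases hcd : BR sR b c ∧ BC sC sR c d
  · have hde : ¬(BR sR c d ∧ BC sC sR d e) := fun h =>
      Set.disjoint_left.1 Chat_disjoint_Ccheck h.2.1 hcd.2.2.1
    rw [ftil, ftil, if_pos hcd, if_neg hde, if_pos hcd]
    exact iff_of_true (BC_phat_pcheck φC φR _) hcd.2
  by_cases hbc : BR sR a b ∧ BC sC sR b c
  · rw [ftil, if_neg hcd, if_pos hbc]
    refine iff_of_false (fun h => ?_) (fun h => ?_)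
    · exact Set.disjoint_left.1 Chat_disjoint_Ccheck h.1
        (pC_pcheck φC φR _ ▸ pcheckC_mem_Ccheck _ _)
    · exact Set.disjoint_left.1 Chat_disjoint_Ccheck h.1 hbc.2.2.1
  by_cases hde : BR sR c d ∧ BC sC sR d e
  · rw [ftil, ftil, if_pos hde]
    refine iff_of_false (fun h => ?_) (fun h => ?_)
    · exact Set.disjoint_left.1 Chat_disjoint_Ccheck (pC_phat φC φR _ ▸ phatC_mem_Chat _ _) h.2.1
    · exact Set.disjoint_left.1 Chat_disjoint_Ccheck hde.2.1 h.2.1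
  rw [ftil, ftil, if_neg hcd, if_neg hbc, if_neg hde, if_neg hcd]
  exact BC_congr (pC_pC_add_pR c b) (pC_pC_add_pR d c)

lemma BR_ftil_ftil_iff [NeZero sC] [NeZero sR] (b c d e g : ℕ) :
    BR sR (ftil sC sR φC φR f b c d e) (ftil sC sR φC φR f c d e g) ↔ BR sR c d := by
  by_cases hcd : BR sR c d ∧ BC sC sR d e
  · have hde : ¬(BR sR d e ∧ BC sC sR e g) := fun h =>
      Set.disjoint_left.1 Rhat_disjoint_Rcheck h.1.1 hcd.1.2.1
    rw [ftil, ftil, if_pos hcd, if_neg hde, if_pos hcd]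
    exact iff_of_true (BR_phat_pcheck φC φR _) hcd.1
  by_cases hbc : BR sR b c ∧ BC sC sR c d
  · rw [ftil, if_neg hcd, if_pos hbc]
    refine iff_of_false (fun h => ?_) (fun h => ?_)
    · exact Set.disjoint_left.1 Rhat_disjoint_Rcheck h.1
        (pR_pcheck φC φR _ ▸ pcheckR_mem_Rcheck _ _)
    · exact Set.disjoint_left.1 Rhat_disjoint_Rcheck h.1 hbc.1.2.1
  by_cases hde : BR sR d e ∧ BC sC sR e g
  · rw [ftil, ftil, if_pos hde]
    refine iff_of_false (fun h => ?_) (fun h => ?_)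
    · exact Set.disjoint_left.1 Rhat_disjoint_Rcheck (pR_phat φC φR _ ▸ phatR_mem_Rhat _ _) h.2.1
    · exact Set.disjoint_left.1 Rhat_disjoint_Rcheck hde.1.1 h.2.1
  rw [ftil, ftil, if_neg hcd, if_neg hbc, if_neg hde, if_neg hcd]
  exact BR_congr (pR_pC_add_pR d c) (pR_pC_add_pR e d)

lemma BC_Ftil_iff [NeZero sC] [NeZero sR] (α : ℤ → ℕ) (x : ℤ) :
    BC sC sR (Ftil sC sR φC φR f α x) (Ftil sC sR φC φR f α (x + 1)) ↔
      BC sC sR (α x) (α (x + 1)) := by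
  rw [Ftil, Ftil, show x + 1 - 2 = x - 1 by ring, add_sub_cancel_right]
  exact BC_ftil_ftil_iff φC φR f _ _ _ _ _

lemma BR_Ftil_iff [NeZero sC] [NeZero sR] (α : ℤ → ℕ) (x : ℤ) :
    BR sR (Ftil sC sR φC φR f α (x + 1)) (Ftil sC sR φC φR f α (x + 2)) ↔
      BR sR (α x) (α (x + 1)) := by
  rw [Ftil, Ftil, show x + 1 - 2 = x - 1 by ring, add_sub_cancel_right,
    show x + 2 - 2 = x by ring, show x + 2 - 1 = x + 1 by ring, show x + 1 + 1 = x + 2 by ring]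
  exact BR_ftil_ftil_iff φC φR f _ _ _ _ _

end Equivariance

theorem stmt18_general (sC sR : ℕ) [NeZero sC] [NeZero sR] (φC : Fin sC ≃ Fin sC)
    (φR : Fin sR ≃ Fin sR) (f : Fin sC × Fin sR → Fin sC × Fin sR)
    (α1 α2 : ℤ → ℕ)
    (hF : Ftil sC sR φC φR f α1 = Ftil sC sR φC φR f α2) :
    ∀ x : ℤ, (BC sC sR (α1 x) (α1 (x + 1)) ↔ BC sC sR (α2 x) (α2 (x + 1))) ∧
      (BR sR (α1 x) (α1 (x + 1)) ↔ BR sR (α2 x) (α2 (x + 1))) := fun x =>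
  ⟨by rw [← BC_Ftil_iff φC φR f α1, ← BC_Ftil_iff φC φR f α2, hF],
    by rw [← BR_Ftil_iff φC φR f α1, ← BR_Ftil_iff φC φR f α2, hF]⟩

theorem stmt18 (sC sR : ℕ) [NeZero sC] [NeZero sR] (φC : Fin sC ≃ Fin sC)
    (φR : Fin sR ≃ Fin sR) (f : Fin sC × Fin sR → Fin sC × Fin sR)
    (hf : Function.Injective f) (α1 α2 : ℤ → ℕ)
    (hα1 : ∀ x : ℤ, α1 x < 4 * sC * sR) (hα2 : ∀ x : ℤ, α2 x < 4 * sC * sR)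
    (hF : Ftil sC sR φC φR f α1 = Ftil sC sR φC φR f α2) :
    ∀ x : ℤ, (BC sC sR (α1 x) (α1 (x + 1)) ↔ BC sC sR (α2 x) (α2 (x + 1))) ∧
      (BR sR (α1 x) (α1 (x + 1)) ↔ BR sR (α2 x) (α2 (x + 1))) :=
  stmt18_general sC sR φC φR f α1 α2 hF
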